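/- Let p be an odd prime and n ≥ 1 an integer. If φ ∈ BSymb_{Γ₁(p)}(𝒱₀(Z/pZ)) is a weight-0 boundary modular symbol of level Γ₁(p) with values in Z/pZ such that Σ_{a ∈ (Z/pZ)^×} (φ({∞})(1) − φ({a/p})(1)) ≢ 0 (mod p), then the Iwasawa λ-invariant of the level-n Mazur–Tate element attached to φ satisfies λ(θ_{n,φ}) = p^n − 1. -/

import Mathlib

noncomputable section

open scoped Classical

/-- The projective line over `ℚ`, realized as the projectivization of `ℚ²`. -/
abbrev P1 : Type := Projectivization ℚ (Fin 2 → ℚ)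

/-- The point of `P¹(ℚ)` corresponding to a rational number `x` (the class of `(x, 1)`). -/
def ratPt (x : ℚ) : P1 :=
  Projectivization.mk ℚ ![x, 1] (fun h => by simpa using congrFun h 1)

/-- The point `∞ ∈ P¹(ℚ)` (the class of `(1, 0)`). -/
def inftyPt : P1 :=
  Projectivization.mk ℚ ![1, 0] (fun h => by simpa using congrFun h 0)

lemma mulVecLin_injective {g : Matrix (Fin 2) (Fin 2) ℚ} (hg : g.det ≠ 0) :
    Function.Injective g.mulVecLin := by
  intro x y hxy
  have h1 := congrArg g⁻¹.mulVec hxy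
  simp only [Matrix.mulVecLin_apply, Matrix.mulVec_mulVec,
    Matrix.nonsing_inv_mul g (isUnit_iff_ne_zero.2 hg), Matrix.one_mulVec] at h1
  exact h1

/-- The action of an integer matrix with nonzero determinant on `P¹(ℚ)` by linear fractional
transformations (acting on column vectors); singular matrices act as the identity (junk). -/
def actP1 (g : Matrix (Fin 2) (Fin 2) ℤ) : P1 → P1 :=
  if hg : (g.map ((↑) : ℤ → ℚ)).det ≠ 0 then
    Projectivization.map (g.map ((↑) : ℤ → ℚ)).mulVecLin (mulVecLin_injective hg)
  else id

/-- The group `Δ` of divisors on `P¹(ℚ)`. -/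
abbrev Dvs : Type := P1 →₀ ℤ

/-- The degree map on divisors. -/
def deg : Dvs →+ ℤ := Finsupp.liftAddHom fun _ => AddMonoidHom.id ℤ

/-- The group `Δ⁰` of degree-zero divisors on `P¹(ℚ)`. -/
abbrev Dvs0 : Type := deg.ker

/-- The action of an integer matrix on divisors. -/
def divAct (g : Matrix (Fin 2) (Fin 2) ℤ) : Dvs →+ Dvs :=
  Finsupp.mapDomain.addMonoidHom (actP1 g)

lemma deg_divAct (g : Matrix (Fin 2) (Fin 2) ℤ) (D : Dvs) :
    deg (divAct g D) = deg D := by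
  have h : deg.comp (divAct g) = deg := by
    apply Finsupp.addHom_ext
    intro x m
    simp [divAct, deg, Finsupp.mapDomain.addMonoidHom_apply, Finsupp.mapDomain_single,
      Finsupp.liftAddHom_apply, Finsupp.sum_single_index]
  exact DFunLike.congr_fun h D

/-- The action of an integer matrix on degree-zero divisors. -/
def div0Act (g : Matrix (Fin 2) (Fin 2) ℤ) : Dvs0 →+ Dvs0 :=
  AddMonoidHom.mk' (fun D => ⟨divAct g D.1, by
      have hD := D.2
      rw [AddMonoidHom.mem_ker] at hD ⊢
      rw [deg_divAct]; exact hD⟩)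
    (fun D E => by
      apply Subtype.ext
      simp [map_add])

/-- The degree-zero divisor `{x} - {y}`. -/
def dvsr (x y : P1) : Dvs0 :=
  ⟨Finsupp.single x 1 - Finsupp.single y 1, by
    rw [AddMonoidHom.mem_ker, map_sub]
    simp [deg, Finsupp.liftAddHom_apply, Finsupp.sum_single_index]⟩

/-- The right action `P ↦ P|γ` of a `2 × 2` matrix `γ = (a b; c d)` on two-variable polynomials,
given by `(P|γ)(X, Y) = P (dX - cY, -bX + aY)`.  On the homogeneous polynomials of degree `k`
this is the right action on `V_k(R)`. -/
def polyAct {R : Type} [CommRing R] (g : Matrix (Fin 2) (Fin 2) R)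
    (P : MvPolynomial (Fin 2) R) : MvPolynomial (Fin 2) R :=
  MvPolynomial.aeval
    ![MvPolynomial.C (g 1 1) * MvPolynomial.X 0 - MvPolynomial.C (g 1 0) * MvPolynomial.X 1,
      MvPolynomial.C (g 0 0) * MvPolynomial.X 1 - MvPolynomial.C (g 0 1) * MvPolynomial.X 0] P

/-- Evaluation of a two-variable polynomial at `(X, Y) = (0, 1)`. -/
def evalXY {R : Type} [CommRing R] (P : MvPolynomial (Fin 2) R) : R :=
  MvPolynomial.eval ![0, 1] P

/-- `x` and `z` lie in the same `Γ₁(N)`-orbit (cusp) of `P¹(ℚ)`. -/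
def inOrb (N : ℕ) (x z : P1) : Prop :=
  ∃ γ ∈ CongruenceSubgroup.Gamma1 N, actP1 γ.1 x = z

/-- The Ramanujan tau function: the coefficients of `q ∏ (1 - qⁿ)²⁴`. -/
def ramanujanTau (n : ℕ) : ℤ :=
  (Polynomial.X * ∏ m ∈ Finset.Icc 1 n, (1 - Polynomial.X ^ m) ^ 24 : Polynomial ℤ).coeff n

/-- A coset representative `(1 j; 0 ℓ)` for the Hecke operator `T_ℓ`. -/
def heckeMat (ℓ j : ℕ) : Matrix (Fin 2) (Fin 2) ℤ := !![1, (j : ℤ); 0, (ℓ : ℤ)]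

/-- The coset representative `(ℓ 0; 0 1)` for the Hecke operator `T_ℓ`. -/
def heckeMatInf (ℓ : ℕ) : Matrix (Fin 2) (Fin 2) ℤ := !![(ℓ : ℤ), 0; 0, 1]

/-- The Hecke operator `T_ℓ` on (level one) modular symbols `Δ⁰ → V_k(R)`. -/
def heckeT {R : Type} [CommRing R] (ℓ : ℕ) (φ : Dvs0 →+ MvPolynomial (Fin 2) R)
    (D : Dvs0) : MvPolynomial (Fin 2) R :=
  (∑ j ∈ Finset.range ℓ,
      polyAct ((heckeMat ℓ j).map (Int.cast : ℤ → R)) (φ (div0Act (heckeMat ℓ j) D)))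
    + polyAct ((heckeMatInf ℓ).map (Int.cast : ℤ → R)) (φ (div0Act (heckeMatInf ℓ) D))

instance neZero_pow_succ (p n : ℕ) [hp : Fact p.Prime] : NeZero (p ^ (n + 1)) :=
  ⟨pow_ne_zero _ hp.out.ne_zero⟩

instance neZero_of_prime (p : ℕ) [hp : Fact p.Prime] : NeZero p := ⟨hp.out.ne_zero⟩

/-- The level-`n` Mazur–Tate element attached to the coefficient data
`c : (ℤ/p^{n+1})^× → R` via the projection `π : (ℤ/p^{n+1})^× ↠ 𝒢ₙ`:
`θ = ∑_a c(a) • σ_{π(a)}` in the group ring `R[𝒢ₙ]`. -/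
def MTel {R : Type} [CommRing R] {G : Type} [CommGroup G] (p n : ℕ)
    [NeZero (p ^ (n + 1))] (π : (ZMod (p ^ (n + 1)))ˣ →* G)
    (c : (ZMod (p ^ (n + 1)))ˣ → R) : MonoidAlgebra R G :=
  ∑ a : (ZMod (p ^ (n + 1)))ˣ, c a • (MonoidAlgebra.of R G (π a))

/-- `F ∈ ℤ_p[𝒢]` has Iwasawa invariants `μ(F) = m` and `λ(F) = l`, computed with respect to the
generator `γ` of `𝒢` (a cyclic group of order `N`), by writing `F = ∑_{i<N} aᵢ Tⁱ` with
`T = γ - 1`: `m` is the minimal `p`-adic valuation of the `aᵢ` and `l` is the first index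
where it is attained. -/
def hasMuLambda (p : ℕ) [Fact p.Prime] {G : Type} [CommGroup G] (N : ℕ) (γ : G)
    (F : MonoidAlgebra ℤ_[p] G) (m l : ℕ) : Prop :=
  ∃ a : ℕ → ℤ_[p],
    F = ∑ i ∈ Finset.range N, a i • (MonoidAlgebra.of ℤ_[p] G γ - 1) ^ i ∧
    (∀ i < N, (p : ℤ_[p]) ^ m ∣ a i) ∧
    (∀ i < l, (p : ℤ_[p]) ^ (m + 1) ∣ a i) ∧
    ¬ (p : ℤ_[p]) ^ (m + 1) ∣ a l

end
noncomputable section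
open scoped Classical

/-- The reduction-mod-`p` of the weight-0 Eisenstein boundary symbol
`φ_{0, ω_p^a, 𝟙} = ∑_{x mod p} (ω_p^a)⁻¹(x) φ_{0,x,p}` (evaluated at the polynomial `1`),
viewed as the function on `P¹(ℚ)` which, at `z`, sums `ω(x)^{p-1-a}` over those
`x ∈ {1, …, p-1}` whose cusp `x/p` contains `z`. -/
def phiE (p : ℕ) [Fact p.Prime] (ω : ℤ → ℤ_[p]) (a : ℕ) (z : P1) : ℤ_[p] :=
  ∑ x ∈ Finset.Ico 1 p,
    if inOrb p (ratPt ((x : ℚ) / (p : ℚ))) z then ω (x : ℤ) ^ (p - 1 - a) else 0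

/-- The boundary symbol `φ₉ ∈ Hom_{Γ₁(27)}(Δ, ℤ/9ℤ)`, constant on `Γ₁(27)`-cusps, with the
explicit values from the paper. -/
def phi9 (z : P1) : ZMod 9 :=
  if inOrb 27 (ratPt (1/9)) z ∨ inOrb 27 (ratPt (8/27)) z ∨ inOrb 27 (ratPt (10/27)) z ∨
     inOrb 27 (ratPt (8/9)) z ∨ inOrb 27 inftyPt z then 0
  else if inOrb 27 (ratPt 0) z ∨ inOrb 27 (ratPt (1/12)) z ∨ inOrb 27 (ratPt (1/10)) z ∨
     inOrb 27 (ratPt (1/8)) z ∨ inOrb 27 (ratPt (5/12)) z then 1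
  else if inOrb 27 (ratPt (2/27)) z ∨ inOrb 27 (ratPt (2/9)) z ∨ inOrb 27 (ratPt (7/27)) z ∨
     inOrb 27 (ratPt (11/27)) z ∨ inOrb 27 (ratPt (7/9)) z then 3
  else if inOrb 27 (ratPt (1/11)) z ∨ inOrb 27 (ratPt (1/7)) z ∨ inOrb 27 (ratPt (1/3)) z ∨
     inOrb 27 (ratPt (1/2)) z ∨ inOrb 27 (ratPt (2/3)) z then 4
  else if inOrb 27 (ratPt (4/27)) z ∨ inOrb 27 (ratPt (5/27)) z ∨ inOrb 27 (ratPt (4/9)) z ∨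
     inOrb 27 (ratPt (13/27)) z ∨ inOrb 27 (ratPt (5/9)) z then 6
  else if inOrb 27 (ratPt (1/13)) z ∨ inOrb 27 (ratPt (1/6)) z ∨ inOrb 27 (ratPt (1/5)) z ∨
     inOrb 27 (ratPt (1/4)) z ∨ inOrb 27 (ratPt (5/6)) z then 7
  else 0

end

/-! The cusp `a/p^{n+1}` is `Γ₁(p)`-equivalent to `(a mod p)/p`, so modulo `p` the coefficient of
`σ_a` in `Θ_{n,φ}` depends only on `a mod p`. As `(ℤ/p^{n+1})ˣ ≅ 𝒢ₙ × (ℤ/p)ˣ` (orders `pⁿ` and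
`p - 1` are coprime), every fibre of the projection to `𝒢ₙ` contributes the same sum `C ≢ 0`, so
`θ_{n,φ} ≡ C · ∑_{g ∈ 𝒢ₙ} g (mod p)`. Writing `γʲ = (1 + T)ʲ`, the hockey-stick identity turns
this norm element into `∑ᵢ binom(pⁿ, i + 1) Tⁱ`, whose coefficients are divisible by `p` except the
last one. -/

open Finset Matrix
open scoped MatrixGroups

theorem ratPt_div_eq_mk {x y : ℚ} (hy : y ≠ 0) :
    ratPt (x / y) = Projectivization.mk ℚ ![x, y] (fun h => hy (by simpa using congrFun h 1)) := by
  rw [ratPt, Projectivization.mk_eq_mk_iff']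
  refine ⟨y⁻¹, ?_⟩
  funext i
  fin_cases i <;> simp [hy, div_eq_mul_inv, mul_comm]

theorem actP1_mk_of_mulVec_eq {g : Matrix (Fin 2) (Fin 2) ℤ} (hg : g.det = 1) {v w : Fin 2 → ℚ}
    (hv : v ≠ 0) (hw : w ≠ 0) (h : g.map ((↑) : ℤ → ℚ) *ᵥ v = w) :
    actP1 g (Projectivization.mk ℚ v hv) = Projectivization.mk ℚ w hw := by
  have hg' : (g.map ((↑) : ℤ → ℚ)).det ≠ 0 := by
    rw [show g.map ((↑) : ℤ → ℚ) = (Int.castRingHom ℚ).mapMatrix g from rfl, ← RingHom.map_det]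
    simp [hg]
  rw [actP1, dif_pos hg', Projectivization.map_mk]
  exact Projectivization.mk_eq_mk_iff' ℚ _ _ _ _ |>.mpr ⟨1, by rw [one_smul, ← h]; rfl⟩

theorem exists_mem_Gamma1_mulVec_eq {N : ℕ} {A r q : ℤ} (hA : IsCoprime A (N * q))
    (hr : (N : ℤ) ∣ r - A) :
    ∃ M ∈ CongruenceSubgroup.Gamma1 N, (M : Matrix (Fin 2) (Fin 2) ℤ) *ᵥ ![A, N * q] = ![r, N] := by
  obtain ⟨x, y, hxy⟩ := hA
  obtain ⟨k, hk⟩ := hr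
  -- Scaling the Bézout relation by `1 - q`, the bottom row solves `c A + d N q = N` with
  -- `d ≡ 1 (mod N)`; the top row completes it to determinant `1` and sends `(A, N q)` to `r`.
  let M : Matrix (Fin 2) (Fin 2) ℤ :=
    !![r * x * (1 - q) + q, k + r * y * (1 - q); N * x * (1 - q), 1 + N * y * (1 - q)]
  have hdet : M.det = 1 := by
    rw [det_fin_two_of]
    linear_combination (1 - q) * hxy + (1 - q) * x * hk
  have hxy' := congrArg (Int.cast : ℤ → ZMod N) hxy
  have hk' := congrArg (Int.cast : ℤ → ZMod N) hk
  push_cast [ZMod.natCast_self] at hxy' hk'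
  refine ⟨⟨M, hdet⟩, (CongruenceSubgroup.Gamma1_mem N _).mpr ⟨?_, ?_, ?_⟩, ?_⟩
  · show ((r * x * (1 - q) + q : ℤ) : ZMod N) = 1
    push_cast
    linear_combination (1 - (q : ZMod N)) * hxy' + x * (1 - (q : ZMod N)) * hk'
  · show ((1 + N * y * (1 - q) : ℤ) : ZMod N) = 1
    simp
  · show ((N * x * (1 - q) : ℤ) : ZMod N) = 0
    simp
  · rw [mulVec_fin_two]
    refine vec2_eq ?_ ?_
    · show (r * x * (1 - q) + q) * A + (k + r * y * (1 - q)) * (N * q) = r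
      linear_combination (1 - q) * r * hxy - q * hk
    · show N * x * (1 - q) * A + (1 + N * y * (1 - q)) * (N * q) = N
      linear_combination (1 - q) * N * hxy

theorem inOrb_ratPt_div_mul {N : ℕ} {A r q : ℤ} (hN : N ≠ 0) (hq : q ≠ 0)
    (hA : IsCoprime A (N * q)) (hr : (N : ℤ) ∣ r - A) :
    inOrb N (ratPt (A / (N * q))) (ratPt (r / N)) := by
  obtain ⟨M, hM, hMv⟩ := exists_mem_Gamma1_mulVec_eq hA hr
  have hN' : (N : ℚ) ≠ 0 := by exact_mod_cast hN
  have hNq : (N : ℚ) * q ≠ 0 := mul_ne_zero hN' (by exact_mod_cast hq)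
  have hMv' : (M : Matrix (Fin 2) (Fin 2) ℤ).map ((↑) : ℤ → ℚ) *ᵥ ![(A : ℚ), N * q] =
      ![(r : ℚ), N] := by
    ext i
    have := RingHom.map_mulVec (Int.castRingHom ℚ) M ![A, N * q] i
    rw [hMv] at this
    fin_cases i <;> simpa using this.symm
  refine ⟨M, hM, ?_⟩
  rw [ratPt_div_eq_mk hNq, ratPt_div_eq_mk hN']
  exact actP1_mk_of_mulVec_eq M.2 _ _ hMv'

theorem inOrb_ratPt_val_div_pow_succ {p : ℕ} [NeZero p] {n : ℕ} (u : (ZMod (p ^ (n + 1)))ˣ) :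
    inOrb p (ratPt ((u : ZMod (p ^ (n + 1))).val / (p : ℚ) ^ (n + 1)))
      (ratPt ((ZMod.unitsMap (dvd_pow_self p n.succ_ne_zero) u : ZMod p).val / p)) := by
  set A := (u : ZMod (p ^ (n + 1))).val
  set r := (ZMod.unitsMap (dvd_pow_self p n.succ_ne_zero) u : ZMod p).val
  have hA : IsCoprime (A : ℤ) (p * p ^ n) := by
    rw [← pow_succ', Int.isCoprime_iff_gcd_eq_one]
    exact_mod_cast ZMod.val_coe_unit_coprime u
  have hr : (p : ℤ) ∣ r - A := by
    rw [← ZMod.intCast_eq_intCast_iff_dvd_sub, Int.cast_natCast, Int.cast_natCast,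
      ZMod.natCast_zmod_val, ZMod.unitsMap_val, ZMod.cast_eq_val]
  have := inOrb_ratPt_div_mul (NeZero.ne p) (pow_ne_zero n (by exact_mod_cast NeZero.ne p)) hA hr
  push_cast at this
  rwa [← pow_succ'] at this

theorem Nat.sum_range_choose_eq_choose_succ (N i : ℕ) :
    ∑ j ∈ range N, j.choose i = N.choose (i + 1) := by
  induction N with
  | zero => simp
  | succ N ih => rw [sum_range_succ, ih, Nat.choose_succ_succ N i, add_comm]

theorem pow_eq_sum_range_choose_nsmul_sub_one_pow {S : Type*} [CommRing S] (x : S) {j N : ℕ}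
    (hj : j < N) : x ^ j = ∑ i ∈ range N, j.choose i • (x - 1) ^ i := by
  calc x ^ j = ((x - 1) + 1) ^ j := by rw [sub_add_cancel]
    _ = ∑ i ∈ range (j + 1), j.choose i • (x - 1) ^ i := by
      simp only [add_pow, one_pow, one_mul, nsmul_eq_mul, mul_comm]
    _ = ∑ i ∈ range N, j.choose i • (x - 1) ^ i := by
      refine sum_subset (range_subset_range.mpr hj) fun i _ hi => ?_
      rw [Nat.choose_eq_zero_of_lt (by simpa using hi), zero_smul]

theorem sum_range_smul_pow_eq_sum_range_smul_sub_one_pow {R S : Type*} [CommRing R] [CommRing S]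
    [Algebra R S] (x : S) (b : ℕ → R) (N : ℕ) :
    ∑ j ∈ range N, b j • x ^ j =
      ∑ i ∈ range N, (∑ j ∈ range N, b j * j.choose i) • (x - 1) ^ i := by
  calc ∑ j ∈ range N, b j • x ^ j
      = ∑ j ∈ range N, ∑ i ∈ range N, (b j * j.choose i) • (x - 1) ^ i := by
        refine sum_congr rfl fun j hj => ?_
        rw [pow_eq_sum_range_choose_nsmul_sub_one_pow x (mem_range.mp hj), smul_sum]
        simp only [mul_smul, Nat.cast_smul_eq_nsmul]
    _ = _ := by rw [sum_comm]; simp only [sum_smul]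

theorem sum_range_orderOf_pow {G M : Type*} [Group G] [Fintype G] [DecidableEq G]
    [AddCommMonoid M] {γ : G} (hγ : ∀ g, g ∈ Subgroup.zpowers γ) (f : G → M) :
    ∑ j ∈ range (orderOf γ), f (γ ^ j) = ∑ g, f g := by
  rw [← IsCyclic.image_range_orderOf hγ, sum_image]
  exact fun i hi j hj h => pow_injOn_Iio_orderOf (by simpa using hi) (by simpa using hj) h

theorem forall_mem_zpowers_of_orderOf_eq_natCard {G : Type*} [Group G] [Finite G] {γ : G}
    (hγ : orderOf γ = Nat.card G) (g : G) : g ∈ Subgroup.zpowers γ := by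
  rw [Subgroup.eq_top_of_card_eq (Subgroup.zpowers γ) (by rw [Nat.card_zpowers, hγ])]
  exact Subgroup.mem_top g

theorem MonoidHom.natCard_ker_mul_natCard_of_surjective {U K : Type*} [Group U] [Group K]
    (f : U →* K) (hf : Function.Surjective f) : Nat.card f.ker * Nat.card K = Nat.card U := by
  rw [← f.ker.card_mul_index, Subgroup.index_ker, f.range_eq_top.mpr hf, Subgroup.card_top]

theorem MonoidHom.prod_bijective_of_coprime {U G H : Type*} [Group U] [Group G] [Group H]
    [Finite U] {π : U →* G} {ρ : U →* H} (hπ : Function.Surjective π)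
    (hρ : Function.Surjective ρ) (hcard : Nat.card U = Nat.card G * Nat.card H)
    (hcop : (Nat.card G).Coprime (Nat.card H)) : Function.Bijective (π.prod ρ) := by
  have hG : 0 < Nat.card G := Nat.pos_of_mul_pos_right (hcard ▸ Nat.card_pos)
  have hH : 0 < Nat.card H := Nat.pos_of_mul_pos_left (hcard ▸ Nat.card_pos)
  have hkerπ : Nat.card π.ker = Nat.card H := by
    have := π.natCard_ker_mul_natCard_of_surjective hπ
    rw [hcard, mul_comm (Nat.card G)] at this
    exact Nat.eq_of_mul_eq_mul_right hG this
  have hkerρ : Nat.card ρ.ker = Nat.card G := by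
    have := ρ.natCard_ker_mul_natCard_of_surjective hρ
    rw [hcard] at this
    exact Nat.eq_of_mul_eq_mul_right hH this
  have hinj : Function.Injective (π.prod ρ) := by
    rw [← MonoidHom.ker_eq_bot_iff, MonoidHom.ker_prod, ← disjoint_iff]
    exact Subgroup.disjoint_of_coprime_natCard (hkerπ ▸ hkerρ ▸ hcop.symm)
  have := Finite.of_surjective π hπ
  have := Finite.of_surjective ρ hρ
  rw [Nat.bijective_iff_injective_and_card, Nat.card_prod]
  exact ⟨hinj, hcard⟩

theorem Finset.sum_filter_comp_eq_sum_of_bijective {U G H M : Type*} [Fintype U] [Fintype G]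
    [Fintype H] [DecidableEq G] [AddCommMonoid M] {π : U → G} {ρ : U → H}
    (h : Function.Bijective fun u => (π u, ρ u)) (f : H → M) (g : G) :
    ∑ u ∈ univ with π u = g, f (ρ u) = ∑ x, f x := by
  calc ∑ u ∈ univ with π u = g, f (ρ u)
      = ∑ u, if (π u, ρ u).1 = g then f (π u, ρ u).2 else 0 := sum_filter _ _
    _ = ∑ y : G × H, if y.1 = g then f y.2 else 0 :=
      (Equiv.ofBijective _ h).sum_comp fun y => if y.1 = g then f y.2 else 0
    _ = ∑ x, f x := by rw [Fintype.sum_prod_type, sum_comm]; simp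

theorem bijective_prod_unitsMap {p n : ℕ} [Fact p.Prime] {G : Type*} [Group G] [Fintype G]
    (hG : Fintype.card G = p ^ n) {π : (ZMod (p ^ (n + 1)))ˣ →* G} (hπ : Function.Surjective π) :
    Function.Bijective (π.prod (ZMod.unitsMap (dvd_pow_self p n.succ_ne_zero))) := by
  have hp : p.Prime := Fact.out
  have hcardG : Nat.card G = p ^ n := by rw [Nat.card_eq_fintype_card, hG]
  have hcardH : Nat.card (ZMod p)ˣ = p - 1 := by rw [Nat.card_eq_fintype_card, ZMod.card_units]
  refine MonoidHom.prod_bijective_of_coprime hπ (ZMod.unitsMap_surjective _) ?_ ?_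
  · rw [hcardG, hcardH, Nat.card_eq_fintype_card, ZMod.card_units_eq_totient,
      Nat.totient_prime_pow_succ hp]
  · rw [hcardG, hcardH]
    exact ((Nat.coprime_self_sub_right hp.one_le).mpr (Nat.coprime_one_right p)).pow_left n

theorem MTel_eq_sum_range_orderOf {R G : Type} [CommRing R] [CommGroup G] [Fintype G]
    [DecidableEq G] {p n : ℕ} [NeZero (p ^ (n + 1))] (π : (ZMod (p ^ (n + 1)))ˣ →* G)
    (c : (ZMod (p ^ (n + 1)))ˣ → R) {γ : G} (hγ : ∀ g, g ∈ Subgroup.zpowers γ) :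
    MTel p n π c = ∑ j ∈ range (orderOf γ),
      (∑ u ∈ univ with π u = γ ^ j, c u) • MonoidAlgebra.of R G γ ^ j := by
  calc MTel p n π c
      = ∑ g, ∑ u ∈ univ with π u = g, c u • MonoidAlgebra.of R G (π u) :=
        (sum_fiberwise _ _ _).symm
    _ = ∑ g, (∑ u ∈ univ with π u = g, c u) • MonoidAlgebra.of R G g := by
        refine sum_congr rfl fun g _ => ?_
        rw [sum_smul]
        exact sum_congr rfl fun u hu => by rw [(mem_filter.mp hu).2]
    _ = _ := by
        rw [← sum_range_orderOf_pow hγ]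
        simp only [map_pow]

theorem PadicInt.toZMod_eq_zero_iff_dvd {p : ℕ} [Fact p.Prime] {x : ℤ_[p]} :
    toZMod x = 0 ↔ (p : ℤ_[p]) ∣ x := by
  rw [← RingHom.mem_ker, ker_toZMod, maximalIdeal_eq_span_p, Ideal.mem_span_singleton]

theorem hasMuLambda_zero_of_toZMod {p : ℕ} [Fact p.Prime] {G : Type} [CommGroup G] {N l : ℕ}
    {γ : G} {a : ℕ → ℤ_[p]} (hlt : ∀ i < l, PadicInt.toZMod (a i) = 0)
    (hl : PadicInt.toZMod (a l) ≠ 0) :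
    hasMuLambda p N γ (∑ i ∈ range N, a i • (MonoidAlgebra.of ℤ_[p] G γ - 1) ^ i) 0 l := by
  refine ⟨a, rfl, fun i _ => by simp, fun i hi => ?_, ?_⟩
  · simpa [PadicInt.toZMod_eq_zero_iff_dvd] using hlt i hi
  · simpa [PadicInt.toZMod_eq_zero_iff_dvd] using hl

theorem toZMod_sum_range_mul_choose {p : ℕ} [Fact p.Prime] {N : ℕ} {b : ℕ → ℤ_[p]}
    {C : ZMod p} (hb : ∀ j < N, PadicInt.toZMod (b j) = C) (i : ℕ) :
    PadicInt.toZMod (∑ j ∈ range N, b j * (j.choose i : ℤ_[p])) =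
      C * (N.choose (i + 1) : ZMod p) := by
  rw [← Nat.sum_range_choose_eq_choose_succ, map_sum, Nat.cast_sum, mul_sum]
  exact sum_congr rfl fun j hj => by rw [map_mul, hb j (mem_range.mp hj), map_natCast]

theorem toZMod_sum_fiber_eq_sum_units {p n : ℕ} [Fact p.Prime] {G : Type*} [Group G] [Fintype G]
    [DecidableEq G] (φ : P1 → ZMod p)
    (hφ : ∀ γ ∈ CongruenceSubgroup.Gamma1 p, ∀ z : P1, φ (actP1 γ.1 z) = φ z)
    {π : (ZMod (p ^ (n + 1)))ˣ →* G}
    (hπ : Function.Bijective (π.prod (ZMod.unitsMap (dvd_pow_self p n.succ_ne_zero)))) (g : G) :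
    PadicInt.toZMod (∑ u ∈ univ with π u = g,
      (((φ inftyPt).val : ℤ_[p]) -
        ((φ (ratPt (((u : ZMod (p ^ (n + 1))).val : ℚ) / (p : ℚ) ^ (n + 1)))).val : ℤ_[p]))) =
      ∑ b : (ZMod p)ˣ, (φ inftyPt - φ (ratPt (((b : ZMod p).val : ℚ) / (p : ℚ)))) := by
  rw [map_sum, ← sum_filter_comp_eq_sum_of_bijective hπ _ g]
  refine sum_congr rfl fun u _ => ?_
  obtain ⟨M, hM, hMu⟩ := inOrb_ratPt_val_div_pow_succ (p := p) u
  rw [map_sub, map_natCast, map_natCast, ZMod.natCast_zmod_val, ZMod.natCast_zmod_val, ← hMu,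
    hφ M hM]

theorem lambda_of_mazur_tate_boundary_symbol_general
    (p : ℕ) [Fact p.Prime] (n : ℕ)
    (φ : P1 → ZMod p)
    (hφ : ∀ γ ∈ CongruenceSubgroup.Gamma1 p, ∀ z : P1, φ (actP1 γ.1 z) = φ z)
    (hC : (∑ b : (ZMod p)ˣ, (φ inftyPt - φ (ratPt (((b : ZMod p).val : ℚ) / (p : ℚ))))) ≠ 0)
    (G : Type) [CommGroup G] [Fintype G] (hG : Fintype.card G = p ^ n)
    (π : (ZMod (p ^ (n + 1)))ˣ →* G) (hπ : Function.Surjective π) :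
    ∀ γ : G, orderOf γ = p ^ n →
      ∃ m : ℕ, hasMuLambda p (p ^ n) γ
        (MTel p n π (fun a =>
          ((φ inftyPt).val : ℤ_[p]) -
            ((φ (ratPt (((a : ZMod (p ^ (n + 1))).val : ℚ) / (p : ℚ) ^ (n + 1)))).val : ℤ_[p])))
        m (p ^ n - 1) := by
  classical
  intro γ hγ
  have hp : p.Prime := Fact.out
  have hgen := forall_mem_zpowers_of_orderOf_eq_natCard
    (hγ.trans (Nat.card_eq_fintype_card.trans hG).symm)
  have hcoeff := toZMod_sum_range_mul_choose (N := p ^ n) fun j _ =>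
    toZMod_sum_fiber_eq_sum_units φ hφ (bijective_prod_unitsMap hG hπ) (γ ^ j)
  refine ⟨0, ?_⟩
  rw [MTel_eq_sum_range_orderOf π _ hgen, hγ, sum_range_smul_pow_eq_sum_range_smul_sub_one_pow]
  refine hasMuLambda_zero_of_toZMod (fun i hi => ?_) ?_
  · rw [hcoeff, (ZMod.natCast_eq_zero_iff _ _).mpr (hp.dvd_choose_pow i.succ_ne_zero (by omega)),
      mul_zero]
  · rwa [hcoeff, Nat.sub_add_cancel (Nat.one_le_pow _ _ hp.pos), Nat.choose_self, Nat.cast_one,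
      mul_one]

/-- Theorem 4.6: let `p` be an odd prime and `n ≥ 1`.  If `φ` is a weight-0 boundary modular
symbol of level `Γ₁(p)` with values in `ℤ/pℤ` (a `Γ₁(p)`-invariant function on `P¹(ℚ)`) such
that `∑_{a ∈ (ℤ/pℤ)ˣ} (φ({∞})(1) - φ({a/p})(1)) ≢ 0 (mod p)`, then the Iwasawa λ-invariant of
the level-`n` Mazur–Tate element `θ_{n,φ} ∈ ℤ_p[𝒢ₙ]` (with values of `φ` lifted to `ℤ_p`)
satisfies `λ(θ_{n,φ}) = pⁿ - 1` (computed with respect to any generator `γ` of `𝒢ₙ`). -/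
theorem lambda_of_mazur_tate_boundary_symbol
    (p : ℕ) [Fact p.Prime] (hodd : Odd p) (n : ℕ) (hn : 1 ≤ n)
    (φ : P1 → ZMod p)
    (hφ : ∀ γ ∈ CongruenceSubgroup.Gamma1 p, ∀ z : P1, φ (actP1 γ.1 z) = φ z)
    (hC : (∑ b : (ZMod p)ˣ, (φ inftyPt - φ (ratPt (((b : ZMod p).val : ℚ) / (p : ℚ))))) ≠ 0)
    (G : Type) [CommGroup G] [Fintype G] (hG : Fintype.card G = p ^ n)
    (π : (ZMod (p ^ (n + 1)))ˣ →* G) (hπ : Function.Surjective π) :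
    ∀ γ : G, orderOf γ = p ^ n →
      ∃ m : ℕ, hasMuLambda p (p ^ n) γ
        (MTel p n π (fun a =>
          ((φ inftyPt).val : ℤ_[p]) -
            ((φ (ratPt (((a : ZMod (p ^ (n + 1))).val : ℚ) / (p : ℚ) ^ (n + 1)))).val : ℤ_[p])))
        m (p ^ n - 1) :=
  lambda_of_mazur_tate_boundary_symbol_general p n φ hφ hC G hG π hπ
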